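/- arXiv:2405.02441 — 2 statements merged into one kernel-verified Lean document; each statement's English description precedes it below -/
import Mathlib

section
/- Among all positive definite matrices C with det(C) = v > 0, if y ~ N(μ, Σ), the probability Pr[y ∈ E(μ', C)] over all centers μ' and shapes C with det(C) = v is uniquely maximized by μ' = μ and C = κΣ where κ = (v/det Σ)^{1/n}. -/
open MeasureTheory Matrix ENNReal

noncomputable def ellipsoid {n : ℕ} (μ : Fin n → ℝ) (C : Matrix (Fin n) (Fin n) ℝ) :
    Set (Fin n → ℝ) :=
  {y | (y - μ) ⬝ᵥ (C⁻¹ *ᵥ (y - μ)) ≤ 1}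

/-- The density of the multivariate Gaussian `N(μ, S)` on `ℝ^n`. -/
noncomputable def gaussianPdf {n : ℕ} (μ : Fin n → ℝ) (S : Matrix (Fin n) (Fin n) ℝ)
    (y : Fin n → ℝ) : ℝ :=
  ((2 * Real.pi) ^ n * S.det) ^ (-(1 : ℝ) / 2) *
    Real.exp (-(1 / 2) * ((y - μ) ⬝ᵥ (S⁻¹ *ᵥ (y - μ))))

/-- The multivariate Gaussian measure `N(μ, S)` on `ℝ^n`. -/
noncomputable def gaussianMeasure {n : ℕ} (μ : Fin n → ℝ) (S : Matrix (Fin n) (Fin n) ℝ) :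
    Measure (Fin n → ℝ) :=
  volume.withDensity fun y => ENNReal.ofReal (gaussianPdf μ S y)

/-- The chi-square distribution with `n` degrees of freedom. -/
noncomputable def chiSquareMeasure (n : ℕ) : Measure ℝ :=
  ProbabilityTheory.gammaMeasure ((n : ℝ) / 2) (1 / 2)

/-- The CDF of the chi-square distribution with `n` degrees of freedom. -/
noncomputable def chiSquareCDF (n : ℕ) (t : ℝ) : ℝ := (chiSquareMeasure n (Set.Iic t)).toReal

/-- The quantile function (generalized inverse CDF) of the chi-square distribution. -/
noncomputable def chiSquareQuantile (n : ℕ) (η : ℝ) : ℝ :=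
  sInf {t : ℝ | η ≤ chiSquareCDF n t}

/-!
The density of `N(μ, S)` is a strictly decreasing function of the squared Mahalanobis distance
`(y - μ)ᵀ S⁻¹ (y - μ)`, so `E(μ, κ S)` is one of its superlevel sets. Every `E(μ', C)` is the image
of the unit ball under an affine map of determinant `√(det C)`, so all admissible ellipsoids have
the volume of `E(μ, κ S)`. Among sets of equal finite volume a superlevel set carries the most
mass, strictly more unless the two sets agree up to a null set (bathtub principle). A closed
ellipsoid is the closure of its interior, so ellipsoids that agree up to a null set are equal, and
an ellipsoid determines its center (its point of symmetry) and its matrix (its gauge).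
-/

open Set Filter Topology

section Bathtub

variable {α : Type*} [MeasurableSpace α] {ν : Measure α} {f : α → ℝ≥0∞} {A B : Set α}
  {c : ℝ≥0∞}

lemma setLIntegral_inter_add_mul_measure_sdiff_le (hA : MeasurableSet A)
    (hB : MeasurableSet B) (hvol : ν A = ν B) (hfin : ν A ≠ ∞) (hf : ∀ x ∈ B, c ≤ f x) :
    ∫⁻ x in A ∩ B, f x ∂ν + c * ν (A \ B) ≤ ∫⁻ x in B, f x ∂ν := by
  have hsdiff : ν (A \ B) = ν (B \ A) := measure_sdiff_symm hA.nullMeasurableSet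
    hB.nullMeasurableSet hvol (measure_ne_top_of_subset inter_subset_left hfin)
  calc ∫⁻ x in A ∩ B, f x ∂ν + c * ν (A \ B)
      = ∫⁻ x in B ∩ A, f x ∂ν + ∫⁻ _ in B \ A, c ∂ν := by
        rw [inter_comm, hsdiff, setLIntegral_const]
    _ ≤ ∫⁻ x in B ∩ A, f x ∂ν + ∫⁻ x in B \ A, f x ∂ν := by
        gcongr 1
        exact setLIntegral_mono' (hB.diff hA) fun x hx => hf x hx.1
    _ = ∫⁻ x in B, f x ∂ν := lintegral_inter_add_sdiff f B hA

lemma setLIntegral_le_setLIntegral_of_superlevelSet (hA : MeasurableSet A)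
    (hB : MeasurableSet B) (hvol : ν A = ν B) (hfin : ν A ≠ ∞) (hf : ∀ x, x ∈ B ↔ c ≤ f x) :
    ∫⁻ x in A, f x ∂ν ≤ ∫⁻ x in B, f x ∂ν :=
  calc ∫⁻ x in A, f x ∂ν = ∫⁻ x in A ∩ B, f x ∂ν + ∫⁻ x in A \ B, f x ∂ν :=
        (lintegral_inter_add_sdiff f A hB).symm
    _ ≤ ∫⁻ x in A ∩ B, f x ∂ν + c * ν (A \ B) := by
        gcongr
        refine (setLIntegral_mono' (hA.diff hB) fun x hx => ?_).trans_eq (setLIntegral_const _ _)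
        exact (not_le.1 (mt (hf x).2 hx.2)).le
    _ ≤ ∫⁻ x in B, f x ∂ν :=
        setLIntegral_inter_add_mul_measure_sdiff_le hA hB hvol hfin fun x => (hf x).1

lemma ae_eq_of_setLIntegral_eq_of_superlevelSet (hA : MeasurableSet A)
    (hB : MeasurableSet B) (hvol : ν A = ν B) (hfin : ν A ≠ ∞) (hf : ∀ x, x ∈ B ↔ c ≤ f x)
    (hint : ∫⁻ x in A, f x ∂ν ≠ ∞) (heq : ∫⁻ x in A, f x ∂ν = ∫⁻ x in B, f x ∂ν) :
    A =ᵐ[ν] B := by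
  have hAB : ν (A \ B) = 0 := by
    by_contra hpos
    have hlt : ∫⁻ x in A \ B, f x ∂ν < c * ν (A \ B) := by
      rw [← setLIntegral_const]
      exact setLIntegral_strict_mono (hA.diff hB) hpos measurable_const
        (ne_top_of_le_ne_top hint (lintegral_mono_set sdiff_subset))
        (ae_of_all _ fun x hx => not_le.1 (mt (hf x).2 hx.2))
    refine heq.not_lt ?_
    calc ∫⁻ x in A, f x ∂ν = ∫⁻ x in A ∩ B, f x ∂ν + ∫⁻ x in A \ B, f x ∂ν :=
          (lintegral_inter_add_sdiff f A hB).symm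
      _ < ∫⁻ x in A ∩ B, f x ∂ν + c * ν (A \ B) :=
          ENNReal.add_lt_add_left
            (ne_top_of_le_ne_top hint (lintegral_mono_set inter_subset_left)) hlt
      _ ≤ ∫⁻ x in B, f x ∂ν :=
          setLIntegral_inter_add_mul_measure_sdiff_le hA hB hvol hfin fun x => (hf x).1
  refine ae_eq_set.2 ⟨hAB, ?_⟩
  rwa [← measure_sdiff_symm hA.nullMeasurableSet hB.nullMeasurableSet hvol
    (measure_ne_top_of_subset inter_subset_left hfin)]

end Bathtub

namespace Matrix

variable {ι : Type*} [Fintype ι]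

def quadForm (M : Matrix ι ι ℝ) (z : ι → ℝ) : ℝ := z ⬝ᵥ (M *ᵥ z)

lemma quadForm_smul (M : Matrix ι ι ℝ) (t : ℝ) (z : ι → ℝ) :
    M.quadForm (t • z) = t ^ 2 * M.quadForm z := by
  simp only [quadForm, mulVec_smul, dotProduct_smul, smul_dotProduct, smul_eq_mul]
  ring

lemma quadForm_neg (M : Matrix ι ι ℝ) (z : ι → ℝ) : M.quadForm (-z) = M.quadForm z := by
  simp [quadForm, mulVec_neg]

lemma smul_quadForm (c : ℝ) (M : Matrix ι ι ℝ) (z : ι → ℝ) :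
    (c • M).quadForm z = c * M.quadForm z := by
  simp [quadForm, smul_mulVec, dotProduct_smul]

lemma quadForm_mulVec (M Q : Matrix ι ι ℝ) (u : ι → ℝ) :
    M.quadForm (Q *ᵥ u) = (Qᵀ * M * Q).quadForm u := by
  simp only [quadForm, ← mulVec_mulVec, dotProduct_mulVec u, vecMul_transpose]

lemma continuous_quadForm (M : Matrix ι ι ℝ) : Continuous M.quadForm :=
  continuous_id.dotProduct (continuous_const.matrix_mulVec continuous_id)

lemma PosDef.quadForm_pos {M : Matrix ι ι ℝ} (hM : M.PosDef) {z : ι → ℝ} (hz : z ≠ 0) :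
    0 < M.quadForm z := by
  simpa [quadForm] using hM.dotProduct_mulVec_pos hz

lemma PosSemidef.quadForm_nonneg {M : Matrix ι ι ℝ} (hM : M.PosSemidef) (z : ι → ℝ) :
    0 ≤ M.quadForm z := by
  simpa [quadForm] using hM.dotProduct_mulVec_nonneg z

lemma eq_of_quadForm_eq [DecidableEq ι] {M N : Matrix ι ι ℝ} (hM : M.IsSymm) (hN : N.IsSymm)
    (h : ∀ z, M.quadForm z = N.quadForm z) : M = N := by
  have hentry : ∀ (P : Matrix ι ι ℝ) (a b : ι), Pi.single a 1 ⬝ᵥ (P *ᵥ Pi.single b 1) = P a b :=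
    fun P a b => by simp [single_dotProduct, mulVec_single]
  ext i j
  have hi := h (Pi.single i 1)
  have hj := h (Pi.single j 1)
  have hij := h (Pi.single i 1 + Pi.single j 1)
  simp only [quadForm, mulVec_add, dotProduct_add, add_dotProduct, hentry] at hi hj hij
  rw [hM.apply i j, hN.apply i j] at hij
  linarith

end Matrix

section Ellipsoid

variable {n : ℕ} {p q : Fin n → ℝ} {C D : Matrix (Fin n) (Fin n) ℝ}

open scoped MatrixOrder

lemma mem_ellipsoid {y : Fin n → ℝ} : y ∈ ellipsoid p C ↔ C⁻¹.quadForm (y - p) ≤ 1 := Iff.rfl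

lemma isClosed_ellipsoid (p : Fin n → ℝ) (C : Matrix (Fin n) (Fin n) ℝ) :
    IsClosed (ellipsoid p C) :=
  isClosed_le (C⁻¹.continuous_quadForm.comp (continuous_id.sub continuous_const)) continuous_const

lemma measurableSet_ellipsoid (p : Fin n → ℝ) (C : Matrix (Fin n) (Fin n) ℝ) :
    MeasurableSet (ellipsoid p C) :=
  (isClosed_ellipsoid p C).measurableSet

lemma ellipsoid_eq_image_sqrt (hC : C.PosDef) (p : Fin n → ℝ) :
    ellipsoid p C = (fun u => p + CFC.sqrt C *ᵥ u) '' {u | u ⬝ᵥ u ≤ 1} := by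
  set Q := CFC.sqrt C
  have hQ : Q * Q = C := CFC.sqrt_mul_sqrt_self C hC.posSemidef.nonneg
  have hQunit : IsUnit Q.det := by
    rw [← isUnit_iff_isUnit_det]
    exact isUnit_of_mul_isUnit_left (hQ ▸ hC.isUnit)
  have hQsymm : Qᵀ = Q := (isHermitian_iff_isSymm.1 (CFC.sqrt_nonneg C).posSemidef.isHermitian).eq
  have hquad : ∀ u, C⁻¹.quadForm (Q *ᵥ u) = u ⬝ᵥ u := fun u => by
    rw [quadForm_mulVec, hQsymm, ← hQ, Matrix.mul_inv_rev, Matrix.mul_assoc, Matrix.mul_assoc,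
      nonsing_inv_mul _ hQunit, Matrix.mul_one, mul_nonsing_inv _ hQunit, quadForm]
    simp
  ext y
  constructor
  · intro hy
    refine ⟨Q⁻¹ *ᵥ (y - p), ?_, ?_⟩
    · rwa [mem_ofPred_eq, ← hquad, mulVec_mulVec, mul_nonsing_inv _ hQunit, one_mulVec]
    · simp only [mulVec_mulVec, mul_nonsing_inv _ hQunit, one_mulVec, add_sub_cancel]
  · rintro ⟨u, hu, rfl⟩
    rwa [mem_ellipsoid, add_sub_cancel_left, hquad]

lemma volume_ellipsoid (hC : C.PosDef) (p : Fin n → ℝ) :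
    volume (ellipsoid p C) = ENNReal.ofReal √C.det * volume {u : Fin n → ℝ | u ⬝ᵥ u ≤ 1} := by
  rw [ellipsoid_eq_image_sqrt hC, ← image_image (p + ·) (CFC.sqrt C *ᵥ ·), image_add_left,
    measure_preimage_add]
  simp_rw [← toLin'_apply]
  rw [Measure.addHaar_image_linearMap, LinearMap.det_toLin', hC.posSemidef.det_sqrt,
    RCLike.sqrt_real, abs_of_nonneg (Real.sqrt_nonneg _)]

lemma volume_unitBall_ne_top : volume {u : Fin n → ℝ | u ⬝ᵥ u ≤ 1} ≠ ∞ := by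
  refine ((Metric.isBounded_closedBall (x := 0) (r := 1)).subset fun u hu => ?_).measure_lt_top.ne
  rw [Metric.mem_closedBall, dist_zero_right, pi_norm_le_iff_of_nonneg zero_le_one]
  intro i
  rw [Real.norm_eq_abs, abs_le_one_iff_mul_self_le_one]
  exact (Finset.single_le_sum (f := fun j => u j * u j) (fun j _ => mul_self_nonneg (u j))
    (Finset.mem_univ i)).trans hu

lemma volume_ellipsoid_ne_top (hC : C.PosDef) (p : Fin n → ℝ) : volume (ellipsoid p C) ≠ ∞ := by
  rw [volume_ellipsoid hC]
  exact mul_ne_top ofReal_ne_top volume_unitBall_ne_top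

lemma volume_ellipsoid_eq (hC : C.PosDef) (hD : D.PosDef) (h : C.det = D.det) :
    volume (ellipsoid p C) = volume (ellipsoid q D) := by
  rw [volume_ellipsoid hC, volume_ellipsoid hD, h]

lemma ellipsoid_subset_closure (p : Fin n → ℝ) (C : Matrix (Fin n) (Fin n) ℝ) :
    ellipsoid p C ⊆ closure {y | C⁻¹.quadForm (y - p) < 1} := by
  intro y hy
  have hlim : Tendsto (fun t : ℝ => p + t • (y - p)) (𝓝[<] 1) (𝓝 y) :=
    ((continuous_const.add (continuous_id.smul continuous_const)).tendsto' 1 y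
      (by simp)).mono_left nhdsWithin_le_nhds
  refine mem_closure_of_tendsto hlim ?_
  filter_upwards [Ioo_mem_nhdsLT (show (-1 : ℝ) < 1 by norm_num)] with t ht
  rw [add_sub_cancel_left, quadForm_smul]
  have ht2 : t ^ 2 < 1 := by
    rw [sq_lt_one_iff_abs_lt_one, abs_lt]
    exact ht
  nlinarith [sq_nonneg t, mem_ellipsoid.1 hy]

lemma ellipsoid_subset_of_volume_sdiff_eq_zero
    (h : volume (ellipsoid p C \ ellipsoid q D) = 0) : ellipsoid p C ⊆ ellipsoid q D := by
  set U := {y | C⁻¹.quadForm (y - p) < 1}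
  have hU : IsOpen U :=
    isOpen_lt (C⁻¹.continuous_quadForm.comp (continuous_id.sub continuous_const)) continuous_const
  have hUE : U ⊆ ellipsoid p C := fun _ hy => mem_ellipsoid.2 (le_of_lt hy)
  have hUD : U \ ellipsoid q D = ∅ :=
    ((hU.sdiff (isClosed_ellipsoid q D)).measure_eq_zero_iff volume).1
      (measure_mono_null (sdiff_subset_sdiff_left hUE) h)
  exact (ellipsoid_subset_closure p C).trans
    (closure_minimal (sdiff_eq_empty.1 hUD) (isClosed_ellipsoid q D))

lemma ellipsoid_eq_of_ae_eq (h : ellipsoid p C =ᵐ[volume] ellipsoid q D) :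
    ellipsoid p C = ellipsoid q D :=
  (ellipsoid_subset_of_volume_sdiff_eq_zero (ae_eq_set.1 h).1).antisymm
    (ellipsoid_subset_of_volume_sdiff_eq_zero (ae_eq_set.1 h).2)

lemma preimage_pointReflection_ellipsoid (p q : Fin n → ℝ) (C : Matrix (Fin n) (Fin n) ℝ) :
    Equiv.pointReflection p ⁻¹' ellipsoid q C = ellipsoid (Equiv.pointReflection p q) C := by
  ext y
  simp only [mem_preimage, mem_ellipsoid, Equiv.pointReflection_apply, vsub_eq_sub, vadd_eq_add]
  rw [← quadForm_neg]
  congr! 2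
  abel

lemma add_inv_sqrt_smul_mem_ellipsoid {z : Fin n → ℝ} (hz : 0 < C⁻¹.quadForm z) :
    p + (√(C⁻¹.quadForm z))⁻¹ • z ∈ ellipsoid p C := by
  rw [mem_ellipsoid, add_sub_cancel_left, quadForm_smul, inv_pow, Real.sq_sqrt hz.le,
    inv_mul_cancel₀ hz.ne']

lemma eq_of_ellipsoid_subset (hC : C.PosDef) (h : ellipsoid p C ⊆ ellipsoid q C) : p = q := by
  by_contra hpq
  have hw : 0 < C⁻¹.quadForm (p - q) := hC.inv.quadForm_pos (sub_ne_zero.2 hpq)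
  set t := (√(C⁻¹.quadForm (p - q)))⁻¹
  have ht : 0 < t := by positivity
  have hbd : t ^ 2 * C⁻¹.quadForm (p - q) = 1 := by
    rw [inv_pow, Real.sq_sqrt hw.le, inv_mul_cancel₀ hw.ne']
  -- the farthest point of `E(p, C)` in the direction `p - q` lies beyond `E(q, C)`
  have hmem := mem_ellipsoid.1 (h (add_inv_sqrt_smul_mem_ellipsoid hw))
  rw [show p + t • (p - q) - q = (t + 1) • (p - q) by module, quadForm_smul] at hmem
  nlinarith

lemma center_eq_of_ellipsoid_eq (hD : D.PosDef) (h : ellipsoid p C = ellipsoid q D) : p = q := by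
  have hsymm : ellipsoid q D ⊆ ellipsoid (Equiv.pointReflection p q) D := by
    rw [← preimage_pointReflection_ellipsoid, ← h, preimage_pointReflection_ellipsoid,
      Equiv.pointReflection_self]
  exact ((Equiv.pointReflection_fixed_iff_of_injective_two_nsmul
    (nsmul_right_injective two_ne_zero)).1 (eq_of_ellipsoid_subset hD hsymm).symm).symm

lemma quadForm_inv_le_of_ellipsoid_subset (hC : C.PosDef) (h : ellipsoid p C ⊆ ellipsoid p D)
    (z : Fin n → ℝ) : D⁻¹.quadForm z ≤ C⁻¹.quadForm z := by
  rcases eq_or_ne z 0 with rfl | hz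
  · simp [quadForm]
  have hq : 0 < C⁻¹.quadForm z := hC.inv.quadForm_pos hz
  set t := (√(C⁻¹.quadForm z))⁻¹
  have hbd : t ^ 2 * C⁻¹.quadForm z = 1 := by
    rw [inv_pow, Real.sq_sqrt hq.le, inv_mul_cancel₀ hq.ne']
  have hmem := mem_ellipsoid.1 (h (add_inv_sqrt_smul_mem_ellipsoid hq))
  rw [add_sub_cancel_left, quadForm_smul] at hmem
  exact le_of_mul_le_mul_left (hmem.trans hbd.ge) (by positivity)

lemma eq_of_ellipsoid_eq (hC : C.PosDef) (hD : D.PosDef) (h : ellipsoid p C = ellipsoid q D) :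
    p = q ∧ C = D := by
  obtain rfl := center_eq_of_ellipsoid_eq hD h
  have hinv : C⁻¹ = D⁻¹ :=
    eq_of_quadForm_eq (isHermitian_iff_isSymm.1 hC.inv.isHermitian)
      (isHermitian_iff_isSymm.1 hD.inv.isHermitian) fun z =>
        (quadForm_inv_le_of_ellipsoid_subset hD h.ge z).antisymm
          (quadForm_inv_le_of_ellipsoid_subset hC h.le z)
  exact ⟨rfl, inv_inj hinv (isUnit_iff_isUnit_det _ |>.1 hC.isUnit)⟩

end Ellipsoid

section Gaussian

variable {n : ℕ} {μ μ' y : Fin n → ℝ} {S C : Matrix (Fin n) (Fin n) ℝ} {κ : ℝ}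

lemma gaussianPdf_eq_mul_exp (μ : Fin n → ℝ) (S : Matrix (Fin n) (Fin n) ℝ) (y : Fin n → ℝ) :
    gaussianPdf μ S y = gaussianPdf μ S μ * Real.exp (-(1 / 2) * S⁻¹.quadForm (y - μ)) := by
  simp [gaussianPdf, quadForm]

lemma gaussianPdf_pos (hS : S.PosDef) (y : Fin n → ℝ) : 0 < gaussianPdf μ S y :=
  mul_pos (Real.rpow_pos_of_pos (mul_pos (by positivity) hS.det_pos) _) (Real.exp_pos _)

lemma gaussianPdf_le_self (hS : S.PosDef) (y : Fin n → ℝ) :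
    gaussianPdf μ S y ≤ gaussianPdf μ S μ := by
  rw [gaussianPdf_eq_mul_exp μ S y]
  refine mul_le_of_le_one_right (gaussianPdf_pos hS μ).le (Real.exp_le_one_iff.2 ?_)
  nlinarith [hS.inv.posSemidef.quadForm_nonneg (y - μ)]

lemma setLIntegral_gaussianPdf_ne_top (hS : S.PosDef) {s : Set (Fin n → ℝ)}
    (hs : MeasurableSet s) (hvol : volume s ≠ ∞) :
    ∫⁻ y in s, ENNReal.ofReal (gaussianPdf μ S y) ≠ ∞ := by
  refine ne_top_of_le_ne_top (mul_ne_top (ofReal_ne_top (r := gaussianPdf μ S μ)) hvol) ?_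
  exact (setLIntegral_mono' hs fun y _ =>
    ENNReal.ofReal_le_ofReal (gaussianPdf_le_self hS y)).trans_eq (setLIntegral_const _ _)

lemma mem_ellipsoid_smul_iff (hS : S.PosDef) (hκ : 0 < κ) :
    y ∈ ellipsoid μ (κ • S) ↔ ENNReal.ofReal (gaussianPdf μ S μ * Real.exp (-(κ / 2))) ≤
      ENNReal.ofReal (gaussianPdf μ S y) := by
  have : Invertible κ := invertibleOfNonzero hκ.ne'
  rw [ENNReal.ofReal_le_ofReal_iff (gaussianPdf_pos hS y).le, gaussianPdf_eq_mul_exp μ S y,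
    mul_le_mul_iff_right₀ (gaussianPdf_pos hS μ), Real.exp_le_exp, mem_ellipsoid,
    Matrix.inv_smul S κ ((isUnit_iff_isUnit_det _).1 hS.isUnit), invOf_eq_inv, smul_quadForm,
    inv_mul_le_iff₀ hκ]
  constructor <;> intro h <;> linarith

lemma gaussianMeasure_ellipsoid_le (hS : S.PosDef) (hκ : 0 < κ) (hC : C.PosDef)
    (hdet : C.det = (κ • S).det) :
    gaussianMeasure μ S (ellipsoid μ' C) ≤ gaussianMeasure μ S (ellipsoid μ (κ • S)) := by
  rw [gaussianMeasure, withDensity_apply _ (measurableSet_ellipsoid _ _),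
    withDensity_apply _ (measurableSet_ellipsoid _ _)]
  exact setLIntegral_le_setLIntegral_of_superlevelSet (measurableSet_ellipsoid _ _)
    (measurableSet_ellipsoid _ _) (volume_ellipsoid_eq hC (hS.smul hκ) hdet)
    (volume_ellipsoid_ne_top hC _) fun _ => mem_ellipsoid_smul_iff hS hκ

lemma eq_of_gaussianMeasure_ellipsoid_eq (hS : S.PosDef) (hκ : 0 < κ) (hC : C.PosDef)
    (hdet : C.det = (κ • S).det)
    (h : gaussianMeasure μ S (ellipsoid μ' C) = gaussianMeasure μ S (ellipsoid μ (κ • S))) :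
    μ' = μ ∧ C = κ • S := by
  rw [gaussianMeasure, withDensity_apply _ (measurableSet_ellipsoid _ _),
    withDensity_apply _ (measurableSet_ellipsoid _ _)] at h
  refine eq_of_ellipsoid_eq hC (hS.smul hκ) (ellipsoid_eq_of_ae_eq ?_)
  exact ae_eq_of_setLIntegral_eq_of_superlevelSet (measurableSet_ellipsoid _ _)
    (measurableSet_ellipsoid _ _) (volume_ellipsoid_eq hC (hS.smul hκ) hdet)
    (volume_ellipsoid_ne_top hC _) (fun _ => mem_ellipsoid_smul_iff hS hκ)
    (setLIntegral_gaussianPdf_ne_top hS (measurableSet_ellipsoid _ _)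
      (volume_ellipsoid_ne_top hC _)) h

end Gaussian

theorem gaussian_prob_max_det_constraint_general {n : ℕ} (μ : Fin n → ℝ)
    (S : Matrix (Fin n) (Fin n) ℝ) (hS : S.PosDef) (v : ℝ) :
    (∀ (μ' : Fin n → ℝ) (C : Matrix (Fin n) (Fin n) ℝ), C.PosDef → C.det = v →
        gaussianMeasure μ S (ellipsoid μ' C) ≤
          gaussianMeasure μ S (ellipsoid μ ((v / S.det) ^ ((1 : ℝ) / n) • S))) ∧
      (∀ (μ' : Fin n → ℝ) (C : Matrix (Fin n) (Fin n) ℝ), C.PosDef → C.det = v →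
        gaussianMeasure μ S (ellipsoid μ' C) =
          gaussianMeasure μ S (ellipsoid μ ((v / S.det) ^ ((1 : ℝ) / n) • S)) →
          μ' = μ ∧ C = (v / S.det) ^ ((1 : ℝ) / n) • S) := by
  set κ := (v / S.det) ^ ((1 : ℝ) / n) with hκ
  have hadmissible : ∀ C : Matrix (Fin n) (Fin n) ℝ, C.PosDef → C.det = v →
      0 < κ ∧ C.det = (κ • S).det := by
    intro C hC hCv
    have hvS : 0 < v / S.det := div_pos (hCv ▸ hC.det_pos) hS.det_pos
    refine ⟨Real.rpow_pos_of_pos hvS _, ?_⟩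
    rcases eq_or_ne n 0 with rfl | hn
    · simp
    · rw [hCv, det_smul, Fintype.card_fin, hκ, one_div, Real.rpow_inv_natCast_pow hvS.le hn,
        div_mul_cancel₀ _ hS.det_pos.ne']
  refine ⟨fun μ' C hC hCv => ?_, fun μ' C hC hCv h => ?_⟩
  · obtain ⟨hκ, hdet⟩ := hadmissible C hC hCv
    exact gaussianMeasure_ellipsoid_le hS hκ hC hdet
  · obtain ⟨hκ, hdet⟩ := hadmissible C hC hCv
    exact eq_of_gaussianMeasure_ellipsoid_eq hS hκ hC hdet h

/-- Among all ellipsoids `E(μ', C)` with fixed determinant `det C = v` (hence fixed volume),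
the Gaussian probability `Pr[y ∈ E(μ', C)]` for `y ~ N(μ, S)` is uniquely maximized at
`μ' = μ` and `C = κ • S` with `κ = (v / det S)^{1/n}`. -/
theorem gaussian_prob_max_det_constraint {n : ℕ} (μ : Fin n → ℝ)
    (S : Matrix (Fin n) (Fin n) ℝ) (hS : S.PosDef) (v : ℝ) (hv : 0 < v) :
    (∀ (μ' : Fin n → ℝ) (C : Matrix (Fin n) (Fin n) ℝ), C.PosDef → C.det = v →
        gaussianMeasure μ S (ellipsoid μ' C) ≤
          gaussianMeasure μ S (ellipsoid μ ((v / S.det) ^ ((1 : ℝ) / n) • S))) ∧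
      (∀ (μ' : Fin n → ℝ) (C : Matrix (Fin n) (Fin n) ℝ), C.PosDef → C.det = v →
        gaussianMeasure μ S (ellipsoid μ' C) =
          gaussianMeasure μ S (ellipsoid μ ((v / S.det) ^ ((1 : ℝ) / n) • S)) →
          μ' = μ ∧ C = (v / S.det) ^ ((1 : ℝ) / n) • S) :=
  gaussian_prob_max_det_constraint_general μ S hS v
end

section
/- Let α_1, …, α_m be i.i.d. real random variables with continuous distribution, and let α be a fresh independent sample from the same distribution. Let α_(q) be the ⌈(m+1)η⌉-th smallest among α_1,…,α_m, where ⌈(m+1)η⌉ ≤ m. Then Pr[α ≤ α_(q)] ≥ η. -/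
/-!
Almost surely the `m + 1` scores are distinct, and then their strict ranks (the number of
scores strictly below a given one) are a permutation of `0, …, m`, so exactly `k` of the scores
have rank `< k`. The i.i.d. law is invariant under permuting coordinates, so these `m + 1`
events are equally likely, each with probability `k / (m + 1)`, which is `≥ η` for
`k = ⌈(m + 1)η⌉`. For the test score, rank `< k` says that fewer than `k` calibration scores lie
strictly below it, which is exactly being at most the `k`-th order statistic.
-/

open MeasureTheory ENNReal

/-- The `k`-th smallest value (1-indexed order statistic) of `f : Fin m → ℝ`. -/
noncomputable def kthSmallest (m : ℕ) (k : ℕ) (f : Fin m → ℝ) : ℝ :=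
  sInf {t : ℝ | k ≤ (Finset.univ.filter fun i => f i ≤ t).card}

open Finset

section Rank

variable {ι α : Type*} [Fintype ι] [LinearOrder α]

def rank (x : ι → α) (i : ι) : ℕ := #{t | x t < x i}

lemma rank_lt_card (x : ι → α) (i : ι) : rank x i < Fintype.card ι :=
  card_lt_univ_of_notMem (x := i) (by simp)

lemma rank_lt_rank {x : ι → α} {i j : ι} (h : x i < x j) : rank x i < rank x j := by
  refine card_lt_card ⟨monotone_filter_right _ fun t _ ht => ht.trans h, fun hsub => ?_⟩
  simpa using hsub (by simpa using h : i ∈ ({t | x t < x j} : Finset ι))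

lemma rank_injective {x : ι → α} (hx : Function.Injective x) : Function.Injective (rank x) := by
  intro i j hij
  by_contra hne
  rcases (hx.ne hne).lt_or_gt with h | h
  · exact (rank_lt_rank h).ne hij
  · exact (rank_lt_rank h).ne' hij

lemma image_rank {x : ι → α} (hx : Function.Injective x) :
    univ.image (rank x) = range (Fintype.card ι) :=
  eq_of_subset_of_card_le (fun r hr => by
      obtain ⟨i, -, rfl⟩ := mem_image.1 hr
      exact mem_range.2 (rank_lt_card x i))
    (by rw [card_range, card_image_of_injective _ (rank_injective hx), card_univ])

lemma card_rank_lt {x : ι → α} (hx : Function.Injective x) {k : ℕ}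
    (hk : k ≤ Fintype.card ι) : #{i | rank x i < k} = k := by
  rw [← card_image_of_injective _ (rank_injective hx), ← filter_image (p := (· < k)), image_rank hx]
  convert card_range k using 2
  ext r
  simp only [mem_filter, mem_range]
  omega

lemma rank_comp_perm (x : ι → α) (σ : Equiv.Perm ι) (i : ι) : rank (x ∘ σ) i = rank x (σ i) :=
  card_equiv σ (by simp)

end Rank

lemma rank_last {α : Type*} [LinearOrder α] {m : ℕ} (x : Fin (m + 1) → α) :
    rank x (Fin.last m) = #{i : Fin m | x i.castSucc < x (Fin.last m)} := by
  rw [rank, card_filter, card_filter, Fin.sum_univ_castSucc, if_neg (lt_irrefl _), add_zero]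

lemma exists_lt_filter_le_eq_filter_lt {ι α : Type*} [Fintype ι] [LinearOrder α] [NoMinOrder α]
    (f : ι → α) (a : α) : ∃ b < a, univ.filter (f · ≤ b) = univ.filter (f · < a) := by
  obtain ⟨c, hca⟩ := exists_lt a
  set B := insert c (({i | f i < a} : Finset ι).image f)
  have hB : ∀ y ∈ B, y < a := by
    simp only [B, mem_insert, mem_image, mem_filter, mem_univ, true_and]
    rintro _ (rfl | ⟨i, hi, rfl⟩) <;> assumption
  have hba : B.max' (insert_nonempty _ _) < a := (max'_lt_iff _ _).2 hB
  refine ⟨_, hba, ?_⟩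
  ext i
  simp only [mem_filter, mem_univ, true_and]
  exact ⟨fun hi => hi.trans_lt hba,
    fun hi => le_max' _ _ (mem_insert_of_mem (mem_image_of_mem f (by simpa using hi)))⟩

lemma le_kthSmallest_iff {m k : ℕ} (hk1 : 1 ≤ k) (hkm : k ≤ m) (f : Fin m → ℝ) (a : ℝ) :
    a ≤ kthSmallest m k f ↔ #{i | f i < a} < k := by
  have hne : {t : ℝ | k ≤ #{i | f i ≤ t}}.Nonempty := by
    obtain ⟨t, ht⟩ := Finite.bddAbove_range f
    refine ⟨t, ?_⟩
    rw [Set.mem_ofPred_eq, filter_true_of_mem fun i _ => ht ⟨i, rfl⟩, card_univ, Fintype.card_fin]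
    exact hkm
  have hbdd : BddBelow {t : ℝ | k ≤ #{i | f i ≤ t}} := by
    obtain ⟨c, hc⟩ := Finite.bddBelow_range f
    refine ⟨c, fun t ht => ?_⟩
    obtain ⟨i, hi⟩ := card_pos.1 (hk1.trans ht)
    exact (hc ⟨i, rfl⟩).trans (mem_filter.1 hi).2
  rw [kthSmallest, le_csInf_iff hbdd hne]
  constructor
  · intro h
    by_contra! hcard
    obtain ⟨b, hba, hb⟩ := exists_lt_filter_le_eq_filter_lt f a
    exact (h b (by rwa [Set.mem_ofPred_eq, hb])).not_gt hba
  · intro hcard b hb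
    by_contra! hba
    exact (hb.trans (card_le_card (monotone_filter_right _ fun i _ hi => hi.trans_lt hba))).not_gt
      hcard

section Exchangeable

variable {ι α : Type*} [Fintype ι] [MeasurableSpace α]

lemma measurePreserving_comp_perm (ν : Measure α) [SigmaFinite ν] (σ : Equiv.Perm ι) :
    MeasurePreserving (fun x : ι → α => x ∘ σ) (Measure.pi fun _ => ν)
      (Measure.pi fun _ => ν) := by
  convert measurePreserving_piCongrLeft (fun _ : ι => ν) σ.symm using 1
  ext x i
  simpa using (MeasurableEquiv.piCongrLeft_apply_apply σ.symm (β := fun _ => α) x (σ i)).symm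

lemma measure_prod_diagonal_eq_zero [MeasurableEq α] (μ ν : Measure α) [SFinite ν]
    [NullSingletonClass ν] :
    μ.prod ν {p | p.1 = p.2} = 0 := by
  refine (Measure.measure_prod_null (measurableSet_eq_fun measurable_fst measurable_snd)).2
    (Filter.Eventually.of_forall fun a => ?_)
  simp [Set.preimage]

lemma measure_pi_setOf_apply_eq_apply [MeasurableEq α] (ν : Measure α) [IsProbabilityMeasure ν]
    [NullSingletonClass ν] {i j : ι} (hij : i ≠ j) :
    Measure.pi (fun _ => ν) {x | x i = x j} = 0 := by
  have hind : ProbabilityTheory.IndepFun (fun x : ι → α => x i) (fun x => x j)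
      (Measure.pi fun _ => ν) :=
    (ProbabilityTheory.iIndepFun_pi (X := fun _ => id) fun _ => aemeasurable_id).indepFun hij
  have hmap := hind.map_prod_eq_prod_map_map (measurable_pi_apply i).aemeasurable
    (measurable_pi_apply j).aemeasurable
  rw [(measurePreserving_eval _ i).map_eq, (measurePreserving_eval _ j).map_eq] at hmap
  change Measure.pi _ ((fun x : ι → α => (x i, x j)) ⁻¹' {p : α × α | p.1 = p.2}) = 0
  rw [← Measure.map_apply (by fun_prop) (measurableSet_eq_fun measurable_fst measurable_snd), hmap,
    measure_prod_diagonal_eq_zero]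

lemma ae_injective_pi [MeasurableEq α] (ν : Measure α) [IsProbabilityMeasure ν]
    [NullSingletonClass ν] :
    ∀ᵐ x ∂Measure.pi (fun _ : ι => ν), Function.Injective x := by
  have hne : ∀ᵐ x ∂Measure.pi (fun _ : ι => ν), ∀ i j, i ≠ j → x i ≠ x j :=
    ae_all_iff.2 fun i => ae_all_iff.2 fun j => by
      rcases eq_or_ne i j with rfl | hij
      · exact .of_forall fun _ h => (h rfl).elim
      · filter_upwards [measure_eq_zero_iff_ae_notMem.1 (measure_pi_setOf_apply_eq_apply ν hij)]
          with x hx _ using hx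
  filter_upwards [hne] with x hx i j hxij
  by_contra hij
  exact hx i j hij hxij

end Exchangeable

section RankMeasure

variable {ι : Type*} [Fintype ι]

lemma measurableSet_rank_lt (i : ι) (k : ℕ) : MeasurableSet {x : ι → ℝ | rank x i < k} := by
  have hrank : Measurable fun x : ι → ℝ => rank x i := by
    simp only [rank, card_filter]
    exact Finset.measurable_sum _ fun t _ => Measurable.ite
      (measurableSet_lt (measurable_pi_apply t) (measurable_pi_apply i)) measurable_const
      measurable_const
  exact hrank measurableSet_Iio

lemma sum_measure_rank_lt (μ : Measure (ι → ℝ)) [IsProbabilityMeasure μ]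
    (hμ : ∀ᵐ x ∂μ, Function.Injective x) {k : ℕ} (hk : k ≤ Fintype.card ι) :
    ∑ i, μ {x | rank x i < k} = k := by
  calc ∑ i, μ {x | rank x i < k}
      = ∑ i, ∫⁻ x, {x | rank x i < k}.indicator 1 x ∂μ := by
        simp only [lintegral_indicator_one (measurableSet_rank_lt _ k)]
    _ = ∫⁻ x, ∑ i, {x | rank x i < k}.indicator 1 x ∂μ :=
        (lintegral_finsetSum _ fun i _ => measurable_one.indicator (measurableSet_rank_lt i k)).symm
    _ = ∫⁻ _, (k : ℝ≥0∞) ∂μ := lintegral_congr_ae <| hμ.mono fun x hx => by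
        simp only [Set.indicator_apply, Set.mem_ofPred_eq, Pi.one_apply]
        rw [sum_boole, card_rank_lt hx hk]
    _ = k := by simp

lemma measure_rank_lt_eq (ν : Measure ℝ) [SigmaFinite ν] (i j : ι) (k : ℕ) :
    Measure.pi (fun _ => ν) {x | rank x i < k} = Measure.pi (fun _ => ν) {x | rank x j < k} := by
  classical
  rw [← (measurePreserving_comp_perm ν (Equiv.swap i j)).measure_preimage
    (measurableSet_rank_lt j k).nullMeasurableSet]
  congr 1
  ext x
  simp [rank_comp_perm]

lemma card_mul_measure_rank_lt (ν : Measure ℝ) [IsProbabilityMeasure ν] [NullSingletonClass ν]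
    {k : ℕ} (hk : k ≤ Fintype.card ι) (i : ι) :
    Fintype.card ι * Measure.pi (fun _ => ν) {x | rank x i < k} = k := by
  have hsum := sum_measure_rank_lt _ (ae_injective_pi ν) hk
  rwa [Finset.sum_congr rfl fun j _ => measure_rank_lt_eq ν j i k, sum_const, card_univ,
    nsmul_eq_mul] at hsum

end RankMeasure

theorem conformal_calibration_general {Ω : Type*} [MeasurableSpace Ω] (P : Measure Ω)
    (m : ℕ) (s : Fin (m + 1) → Ω → ℝ)
    (ν : Measure ℝ) [IsProbabilityMeasure ν] (hν : ∀ x : ℝ, ν {x} = 0)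
    (hmeas : ∀ i, Measurable (s i))
    (hiid : P.map (fun ω => fun i => s i ω) = Measure.pi fun _ : Fin (m + 1) => ν)
    (η : ℝ) (hη : η ∈ Set.Ioo (0 : ℝ) 1)
    (hk : ⌈((m : ℝ) + 1) * η⌉₊ ≤ m) :
    ENNReal.ofReal η ≤
      P {ω | s (Fin.last m) ω ≤
        kthSmallest m ⌈((m : ℝ) + 1) * η⌉₊ fun i : Fin m => s i.castSucc ω} := by
  set k := ⌈((m : ℝ) + 1) * η⌉₊
  have hk1 : 1 ≤ k := Nat.ceil_pos.2 (mul_pos (by positivity) hη.1)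
  have : NullSingletonClass ν := ⟨hν⟩
  have hevent : {ω | s (Fin.last m) ω ≤ kthSmallest m k fun i : Fin m => s i.castSucc ω}
      = (fun ω i => s i ω) ⁻¹' {x | rank x (Fin.last m) < k} := by
    ext ω
    simp only [Set.mem_ofPred_eq, Set.mem_preimage, le_kthSmallest_iff hk1 hk, rank_last]
  have hcard : ((m : ℝ≥0∞) + 1) * P {ω | s (Fin.last m) ω ≤
      kthSmallest m k fun i : Fin m => s i.castSucc ω} = k := by
    rw [hevent, ← Measure.map_apply (measurable_pi_lambda _ hmeas) (measurableSet_rank_lt _ _),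
      hiid]
    simpa using card_mul_measure_rank_lt ν (by simpa using hk.trans m.le_succ) (Fin.last m)
  refine (ENNReal.mul_le_mul_iff_right (a := (m : ℝ≥0∞) + 1) (by simp) (by finiteness)).1 ?_
  calc ((m : ℝ≥0∞) + 1) * ENNReal.ofReal η = ENNReal.ofReal (((m : ℝ) + 1) * η) := by
        rw [ENNReal.ofReal_mul (by positivity)]
        norm_cast
    _ ≤ ENNReal.ofReal k := ENNReal.ofReal_le_ofReal (Nat.le_ceil _)
    _ = _ := (ENNReal.ofReal_natCast k).trans hcard.symm

/-- Split conformal calibration guarantee: if `α₁, …, α_m, α` are i.i.d. with a continuous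
(atomless) common distribution `ν` and `k = ⌈(m+1)η⌉ ≤ m`, then the fresh sample `α`
is at most the `k`-th order statistic of `α₁, …, α_m` with probability at least `η`. -/
theorem conformal_calibration {Ω : Type*} [MeasurableSpace Ω] (P : Measure Ω)
    [IsProbabilityMeasure P] (m : ℕ) (s : Fin (m + 1) → Ω → ℝ)
    (ν : Measure ℝ) [IsProbabilityMeasure ν] (hν : ∀ x : ℝ, ν {x} = 0)
    (hmeas : ∀ i, Measurable (s i))
    (hiid : P.map (fun ω => fun i => s i ω) = Measure.pi fun _ : Fin (m + 1) => ν)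
    (η : ℝ) (hη : η ∈ Set.Ioo (0 : ℝ) 1)
    (hk : ⌈((m : ℝ) + 1) * η⌉₊ ≤ m) :
    ENNReal.ofReal η ≤
      P {ω | s (Fin.last m) ω ≤
        kthSmallest m ⌈((m : ℝ) + 1) * η⌉₊ fun i : Fin m => s i.castSucc ω} :=
  conformal_calibration_general P m s ν hν hmeas hiid η hη hk
end
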